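/- Let X^n be i.i.d. Bernoulli(p) with p in (0,1). Let f: F_2^n → F_2^k be an arbitrary encoder and g: F_2^k → F_2^n an F_2-linear decoder (not necessarily local) with P[g(f(X^n)) ≠ X^n] ≤ ε. Then k ≥ n − log(1−ε)/log(max{p,1−p}). -/

import Mathlib

open scoped Classical BigOperators
open Filter

noncomputable section

/-- Hamming weight of a binary vector. -/
def hw {n : ℕ} (x : Fin n → ZMod 2) : ℕ :=
  (Finset.univ.filter fun i => x i ≠ 0).card

/-- Probability mass of a vector under the product Bernoulli(p) measure. -/
def pmass (p : ℝ) {n : ℕ} (x : Fin n → ZMod 2) : ℝ :=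
  p ^ hw x * (1 - p) ^ (n - hw x)

/-- Probability of a set under the product Bernoulli(p) measure. -/
def pmeas (p : ℝ) {n : ℕ} (S : Set (Fin n → ZMod 2)) : ℝ :=
  ∑ x : Fin n → ZMod 2, if x ∈ S then pmass p x else 0

/-- A decoder is `t`-local if each output coordinate depends on at most `t`
input coordinates. -/
def IsLocal {k n : ℕ} (g : (Fin k → ZMod 2) → (Fin n → ZMod 2)) (t : ℕ) : Prop :=
  ∀ a : Fin n, ∃ N : Finset (Fin k), N.card ≤ t ∧
    ∀ y y' : Fin k → ZMod 2, (∀ j ∈ N, y j = y' j) → g y a = g y' a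


/-!
Every correctly decoded input `x` satisfies `x = g (f x)`, so it lies in the range `V` of `g`, a
subspace of dimension `d ≤ k`. Some `d` coordinates determine the vectors of `V`; bounding the
Bernoulli weights of the remaining `n - d` coordinates by `q = max p (1 - p)` and summing the
weights of the determining coordinates over all patterns gives `1 - ε ≤ P[V] ≤ q ^ (n - d)`.
Taking logarithms (`log q < 0`) yields the bound.
-/

open Finset

section CoordinateRestriction

variable {ι K : Type*} [Fintype ι] [Field K]

theorem Submodule.exists_card_le_finrank_injOn_restrict (V : Submodule K (ι → K)) :
    ∃ I : Finset ι, #I ≤ Module.finrank K V ∧ Set.InjOn I.restrict (V : Set (ι → K)) := by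
  -- A maximal independent subfamily of the coordinate functionals on `V` spans all of them.
  let coord : ι → Module.Dual K V := fun i => (LinearMap.proj i).comp V.subtype
  obtain ⟨b, -, -, hspan, hli⟩ :=
    exists_linearIndepOn_extension (K := K) (v := coord) (linearIndepOn_empty K coord)
      (Set.empty_subset Set.univ)
  refine ⟨b.toFinset, ?_, fun x hx y hy hxy => ?_⟩
  · rw [Set.toFinset_card, ← Subspace.dual_finrank_eq]
    exact hli.fintype_card_le_finrank
  · let z : V := ⟨x - y, V.sub_mem hx hy⟩
    have hb : coord '' b ⊆ LinearMap.ker (Module.Dual.eval K V z) := by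
      rintro _ ⟨i, hi, rfl⟩
      simpa [coord, z, sub_eq_zero] using congrFun hxy ⟨i, Set.mem_toFinset.mpr hi⟩
    funext i
    have := Submodule.span_le.mpr hb (hspan ⟨i, trivial, rfl⟩)
    simpa [coord, z, sub_eq_zero] using this

end CoordinateRestriction

theorem Finset.sum_prod_le_pow_of_injOn_restrict {ι α : Type*} [Fintype ι] [Fintype α]
    {w : α → ℝ} {q : ℝ} (hw0 : ∀ a, 0 ≤ w a) (hw1 : ∑ a, w a = 1) (hwq : ∀ a, w a ≤ q)
    {S : Finset (ι → α)} {I : Finset ι} (hS : Set.InjOn I.restrict (S : Set (ι → α))) :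
    ∑ x ∈ S, ∏ i, w (x i) ≤ q ^ (Fintype.card ι - #I) := by
  have hq0 : 0 ≤ q := by
    rcases isEmpty_or_nonempty α with hα | ⟨⟨a⟩⟩
    · simp at hw1
    · exact (hw0 a).trans (hwq a)
  have hmarginal : ∑ x ∈ S, ∏ i : I, w (I.restrict x i) ≤ 1 :=
    calc ∑ x ∈ S, ∏ i : I, w (I.restrict x i)
        = ∑ y ∈ S.image I.restrict, ∏ i, w (y i) :=
          (sum_image (f := fun y : I → α => ∏ i, w (y i)) hS).symm
      _ ≤ ∑ y : I → α, ∏ i, w (y i) := sum_le_sum_of_subset_of_nonneg (subset_univ _)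
          fun y _ _ => prod_nonneg fun i _ => hw0 _
      _ = 1 := by rw [← Fintype.prod_sum, hw1, prod_const_one]
  calc ∑ x ∈ S, ∏ i, w (x i)
      = ∑ x ∈ S, (∏ i : I, w (I.restrict x i)) * ∏ i ∈ Iᶜ, w (x i) := by
        refine sum_congr rfl fun x _ => ?_
        rw [← prod_mul_prod_compl I, ← prod_coe_sort I]
        rfl
    _ ≤ ∑ x ∈ S, (∏ i : I, w (I.restrict x i)) * q ^ (Fintype.card ι - #I) := by
        refine sum_le_sum fun x _ => mul_le_mul_of_nonneg_left ?_ (prod_nonneg fun i _ => hw0 _)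
        rw [← card_compl, ← prod_const]
        exact prod_le_prod (fun i _ => hw0 _) fun i _ => hwq _
    _ ≤ q ^ (Fintype.card ι - #I) := by
        rw [← sum_mul]
        exact mul_le_of_le_one_left (pow_nonneg hq0 _) hmarginal

theorem Real.natCast_le_log_div_log_of_le_pow {c q : ℝ} {m : ℕ} (hc : 0 < c) (hq0 : 0 < q)
    (hq1 : q < 1) (h : c ≤ q ^ m) : (m : ℝ) ≤ Real.log c / Real.log q := by
  rw [le_div_iff_of_neg (Real.log_neg hq0 hq1), ← Real.log_pow]
  exact Real.log_le_log hc h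

def bernoulliWeight (p : ℝ) (b : ZMod 2) : ℝ :=
  if b = 0 then 1 - p else p

section Bernoulli

variable {p : ℝ} {n : ℕ}

theorem sum_bernoulliWeight (p : ℝ) : ∑ b, bernoulliWeight p b = 1 := by
  rw [show (univ : Finset (ZMod 2)) = {0, 1} from rfl]
  simp [bernoulliWeight]

theorem bernoulliWeight_nonneg (hp0 : 0 ≤ p) (hp1 : p ≤ 1) (b : ZMod 2) :
    0 ≤ bernoulliWeight p b := by
  unfold bernoulliWeight; split_ifs <;> linarith

theorem bernoulliWeight_le_max (p : ℝ) (b : ZMod 2) : bernoulliWeight p b ≤ max p (1 - p) := by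
  unfold bernoulliWeight; split_ifs <;> simp

theorem pmass_eq_prod (p : ℝ) (x : Fin n → ZMod 2) :
    pmass p x = ∏ i, bernoulliWeight p (x i) := by
  have hcard := card_filter_add_card_filter_not (s := univ) (fun i => x i ≠ 0)
  simp only [card_univ, Fintype.card_fin, not_not] at hcard
  have hzeros : n - hw x = #{i | x i = 0} := by rw [hw]; omega
  rw [pmass, hzeros, mul_comm]
  simp only [bernoulliWeight, prod_ite, prod_const, hw, ne_eq]

theorem pmass_nonneg (hp0 : 0 ≤ p) (hp1 : p ≤ 1) (x : Fin n → ZMod 2) : 0 ≤ pmass p x := by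
  rw [pmass_eq_prod]
  exact prod_nonneg fun i _ => bernoulliWeight_nonneg hp0 hp1 _

theorem pmeas_add_pmeas_compl (p : ℝ) (S : Set (Fin n → ZMod 2)) :
    pmeas p S + pmeas p Sᶜ = 1 := by
  simp only [pmeas, ← sum_add_distrib, Set.mem_compl_iff, ite_not, ite_add_ite, add_zero,
    zero_add, ite_self, pmass_eq_prod]
  rw [← Fintype.prod_sum, sum_bernoulliWeight, prod_const_one]

theorem pmeas_mono (hp0 : 0 ≤ p) (hp1 : p ≤ 1) {S T : Set (Fin n → ZMod 2)} (hST : S ⊆ T) :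
    pmeas p S ≤ pmeas p T := by
  refine sum_le_sum fun x _ => ?_
  by_cases hxS : x ∈ S
  · simp [hxS, hST hxS]
  · simp only [hxS, if_false]
    split_ifs <;> simp [pmass_nonneg hp0 hp1]

theorem pmeas_le_pow_of_injOn_restrict (hp0 : 0 ≤ p) (hp1 : p ≤ 1) {S : Set (Fin n → ZMod 2)}
    {I : Finset (Fin n)} (hS : Set.InjOn I.restrict S) :
    pmeas p S ≤ max p (1 - p) ^ (n - #I) := by
  rw [pmeas, ← sum_filter]
  simp only [pmass_eq_prod]
  simpa using sum_prod_le_pow_of_injOn_restrict (bernoulliWeight_nonneg hp0 hp1)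
    (sum_bernoulliWeight p) (bernoulliWeight_le_max p) (S := univ.filter (· ∈ S))
    (hS.mono fun x hx => by simpa using hx)

end Bernoulli

theorem stmt8 {n k : ℕ} (p ε : ℝ) (hp0 : 0 < p) (hp1 : p < 1) (hε1 : ε < 1)
    (f : (Fin n → ZMod 2) → (Fin k → ZMod 2))
    (g : (Fin k → ZMod 2) →ₗ[ZMod 2] (Fin n → ZMod 2))
    (herr : pmeas p {x | g (f x) ≠ x} ≤ ε) :
    (n : ℝ) - Real.log (1 - ε) / Real.log (max p (1 - p)) ≤ (k : ℝ) := by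
  obtain ⟨I, hIrank, hI⟩ := (LinearMap.range g).exists_card_le_finrank_injOn_restrict
  have hIk : #I ≤ k :=
    hIrank.trans ((LinearMap.finrank_range_le g).trans_eq (Module.finrank_fin_fun _))
  have hsuccess : 1 - ε ≤ max p (1 - p) ^ (n - #I) :=
    calc 1 - ε ≤ pmeas p {x | g (f x) ≠ x}ᶜ := by
          linarith [pmeas_add_pmeas_compl p {x | g (f x) ≠ x}]
      _ ≤ pmeas p (LinearMap.range g) :=
          pmeas_mono hp0.le hp1.le fun x hx => LinearMap.mem_range.mpr ⟨f x, not_not.mp hx⟩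
      _ ≤ max p (1 - p) ^ (n - #I) := pmeas_le_pow_of_injOn_restrict hp0.le hp1.le hI
  have hlog := Real.natCast_le_log_div_log_of_le_pow (by linarith) (lt_max_of_lt_left hp0)
    (max_lt hp1 (by linarith)) hsuccess
  rw [Nat.cast_sub (card_le_univ I |>.trans_eq (Fintype.card_fin n))] at hlog
  have hIk' : (#I : ℝ) ≤ k := by exact_mod_cast hIk
  linarith
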